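/- For all real s and t, the generating function of the Laplace polynomials Q_k satisfies Σ_{k=0}^{∞} Q_k(t) · s^{k+1} / (k+1)! = √(2π) · e^{(s+t)²/2} · (Φ(s+t) − Φ(t)), where Φ is the standard normal cumulative distribution function. -/

import Mathlib

open MeasureTheory Polynomial

/-- The standard normal cumulative distribution function. -/
noncomputable def gaussCdf (t : ℝ) : ℝ :=
  ∫ s in Set.Iic t, Real.exp (-s ^ 2 / 2) / Real.sqrt (2 * Real.pi)

/-- The Laplace polynomials `P_k`. -/
noncomputable def laplaceP : ℕ → Polynomial ℝ
  | 0 => 1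
  | k + 1 => X * laplaceP k + derivative (laplaceP k)

/-- The Laplace polynomials `Q_k`. -/
noncomputable def laplaceQ : ℕ → Polynomial ℝ
  | 0 => 1
  | k + 1 => laplaceP (k + 1) + derivative (laplaceQ k)

/-!
The function `H x = exp (x²/2) * ∫ u in t..x, exp (-u²/2)` solves `H' = x H + 1` and vanishes
at `t`. Differentiating the equation repeatedly gives `H^(k+1) = P_(k+1) H + Q_k`, so
`H^(k+1) t = Q_k t`, and the claim is the Taylor expansion of `H` at `t` evaluated at `t + s`.
Since `exp (-z²/2)` has an entire primitive, `H` extends to an entire function, so its Taylor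
series converges everywhere.
-/

theorem iteratedDeriv_succ_eq_laplaceP_mul_add_laplaceQ {𝕜 : Type*} [RCLike 𝕜] {H : 𝕜 → 𝕜}
    (hH : ∀ z, HasDerivAt H (z * H z + 1) z) (n : ℕ) :
    iteratedDeriv (n + 1) H = fun z => aeval z (laplaceP (n + 1)) * H z + aeval z (laplaceQ n) := by
  induction n with
  | zero =>
    funext z
    simp [(hH z).deriv, laplaceP, laplaceQ]
  | succ n ih =>
    rw [iteratedDeriv_succ, ih]
    funext z
    refine ((((laplaceP (n + 1)).hasDerivAt_aeval z).mul (hH z)).add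
      ((laplaceQ n).hasDerivAt_aeval z)).deriv.trans ?_
    rw [laplaceP.eq_2 (n + 1), laplaceQ.eq_2 n]
    simp only [map_add, map_mul, aeval_X]
    ring

theorem hasSum_laplaceQ_of_hasDerivAt {H : ℂ → ℂ} (hH : ∀ z, HasDerivAt H (z * H z + 1) z)
    {c : ℂ} (hc : H c = 0) (z : ℂ) :
    HasSum (fun k : ℕ => aeval c (laplaceQ k) * (z - c) ^ (k + 1) / (k + 1).factorial) (H z) := by
  have taylor := Complex.hasSum_taylorSeries_of_entire (fun z => (hH z).differentiableAt) c z
  rw [← hasSum_nat_add_iff' 1] at taylor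
  simp only [Finset.range_one, Finset.sum_singleton, iteratedDeriv_zero, hc, sub_zero,
    iteratedDeriv_succ_eq_laplaceP_mul_add_laplaceQ hH, mul_zero, zero_add, smul_eq_mul] at taylor
  exact taylor.congr_fun fun k => by ring

theorem hasDerivAt_cexp_sq_div_two_mul {E : ℂ → ℂ}
    (hE : ∀ z, HasDerivAt E (Complex.exp (-z ^ 2 / 2)) z) (z : ℂ) :
    HasDerivAt (fun z => Complex.exp (z ^ 2 / 2) * E z)
      (z * (Complex.exp (z ^ 2 / 2) * E z) + 1) z := by
  have hsq : HasDerivAt (fun z : ℂ => z ^ 2 / 2) z z := by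
    simpa using (hasDerivAt_pow 2 z).div_const 2
  refine (hsq.cexp.mul (hE z)).congr_deriv ?_
  rw [mul_assoc, ← Complex.exp_add, neg_div, add_neg_cancel, Complex.exp_zero]
  ring

theorem sub_eq_integral_exp_neg_sq_div_two {E : ℂ → ℂ}
    (hE : ∀ z, HasDerivAt E (Complex.exp (-z ^ 2 / 2)) z) (a b : ℝ) :
    E b - E a = ↑(∫ x in a..b, Real.exp (-x ^ 2 / 2)) := by
  have ftc := intervalIntegral.integral_eq_sub_of_hasDerivAt (fun x _ => (hE x).comp_ofReal)
    (Continuous.intervalIntegrable (by fun_prop) a b)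
  rw [← ftc, ← intervalIntegral.integral_ofReal]
  push_cast
  rfl

theorem gaussCdf_sub_gaussCdf (a b : ℝ) :
    gaussCdf b - gaussCdf a = (∫ x in a..b, Real.exp (-x ^ 2 / 2)) / √(2 * Real.pi) := by
  have hint : Integrable fun x : ℝ => Real.exp (-x ^ 2 / 2) / √(2 * Real.pi) := by
    simpa [div_eq_inv_mul, mul_comm] using
      (integrable_exp_neg_mul_sq (b := 1 / 2) (by norm_num)).div_const (√(2 * Real.pi))
  rw [gaussCdf, gaussCdf, intervalIntegral.integral_Iic_sub_Iic hint.integrableOn hint.integrableOn,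
    intervalIntegral.integral_div]

/-- For all real `s` and `t`,
`Σ_k Q_k(t)·s^{k+1}/(k+1)! = √(2π)·e^{(s+t)²/2}·(Φ(s+t) − Φ(t))`. -/
theorem laplaceQ_genFun (s t : ℝ) :
    HasSum (fun k : ℕ => (laplaceQ k).eval t * s ^ (k + 1) / ((k + 1).factorial : ℝ))
      (Real.sqrt (2 * Real.pi) * Real.exp ((s + t) ^ 2 / 2) *
        (gaussCdf (s + t) - gaussCdf t)) := by
  obtain ⟨E, hEt, hE⟩ := (Differentiable.isExactOn_univ
    (f := fun z : ℂ => Complex.exp (-z ^ 2 / 2)) (by fun_prop)).with_val_at (t : ℂ) 0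
  replace hE : ∀ z, HasDerivAt E (Complex.exp (-z ^ 2 / 2)) z := fun z => hE z trivial
  have taylor := hasSum_laplaceQ_of_hasDerivAt (hasDerivAt_cexp_sq_div_two_mul hE) (c := t)
    (by simp [hEt]) (s + t)
  have hE_st : E (s + t) = ↑(∫ x in t..s + t, Real.exp (-x ^ 2 / 2)) := by
    simpa [hEt] using sub_eq_integral_exp_neg_sq_div_two hE t (s + t)
  rw [← Complex.hasSum_ofReal]
  convert taylor using 1
  · funext k
    push_cast
    rw [add_sub_cancel_right]
    exact congrArg (· * _ / _) (Polynomial.ofReal_eval _ _)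
  · have hsqrt : (√(2 * Real.pi) : ℂ) ≠ 0 := by
      exact_mod_cast (Real.sqrt_pos.2 (by positivity)).ne'
    rw [gaussCdf_sub_gaussCdf, hE_st]
    push_cast
    field_simp
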